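/- arXiv:1303.0412 — 5 statements merged into one kernel-verified Lean document; each statement's English description precedes it below -/
import Mathlib

section
/- (Herbrand's theorem) Every finitely satisfiable set of quantifier-free L-sentences has a minimal model, i.e., a model that is a minimal L-structure. -/
/-!
By compactness `S` has a model `M`. Its smallest substructure, the one generated by the constants,
is minimal, and it is still a model of `S` because quantifier-free sentences are preserved along
embeddings.
-/

open FirstOrder FirstOrder.Language

universe u v

def FirstOrder.Language.IsMinimal (L : FirstOrder.Language.{u, v}) (M : Type w) [L.Structure M] :
    Prop :=
  Substructure.closure L (∅ : Set M) = ⊤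

namespace FirstOrder.Language

variable {L : Language.{u, v}} {M : Type*} [L.Structure M]

theorem Substructure.isMinimal_bot : L.IsMinimal (⊥ : L.Substructure M) := by
  -- Pushed forward into `M` along the inclusion, both sides become `⊥`.
  refine Substructure.map_injective_of_injective (f := (⊥ : L.Substructure M).subtype.toHom)
    (⊥ : L.Substructure M).subtype.injective ?_
  rw [Substructure.map_closure, Set.image_empty, Substructure.closure_empty,
    ← Hom.range_eq_map, Substructure.range_subtype]

theorem Theory.isUniversal_of_isQF {T : L.Theory} (hT : ∀ φ ∈ T, φ.IsQF) : T.IsUniversal :=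
  ⟨fun φ hφ => (hT φ hφ).isUniversal⟩

end FirstOrder.Language

theorem herbrand_general (L : FirstOrder.Language.{u, v})
    (S : Set L.Sentence) (hqf : ∀ φ ∈ S, BoundedFormula.IsQF φ)
    (hfs : Theory.IsFinitelySatisfiable S) :
    ∃ (M : Type (max u v)) (_ : L.Structure M), L.IsMinimal M ∧ ∀ φ ∈ S, M ⊨ φ := by
  obtain ⟨M⟩ := Theory.isSatisfiable_iff_isFinitelySatisfiable.2 hfs
  have := Theory.isUniversal_of_isQF hqf
  exact ⟨(⊥ : L.Substructure M), inferInstance, Substructure.isMinimal_bot,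
    (Theory.model_iff S).1 inferInstance⟩

/-- **Herbrand's theorem.** Every finitely satisfiable set of quantifier-free `L`-sentences
has a minimal model. -/
theorem herbrand (L : FirstOrder.Language.{u, v}) [Nonempty L.Constants]
    (S : Set L.Sentence) (hqf : ∀ φ ∈ S, BoundedFormula.IsQF φ)
    (hfs : Theory.IsFinitelySatisfiable S) :
    ∃ (M : Type (max u v)) (_ : L.Structure M), L.IsMinimal M ∧ ∀ φ ∈ S, M ⊨ φ :=
  herbrand_general L S hqf hfs
end

section
/- If φ is an existential L-sentence (a quantifier-free formula preceded by a block of existential quantifiers), then Mod_S(φ) is open in the topological space (S_L, τ). -/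
open FirstOrder FirstOrder.Language

universe u v

/-- `qf L M` is the quantifier-free theory of `M`: the set of quantifier-free
`L`-sentences true in `M`. -/
def FirstOrder.Language.qf (L : FirstOrder.Language.{u, v}) (M : Type w) [L.Structure M] :
    Set L.Sentence :=
  {φ : L.Sentence | BoundedFormula.IsQF φ ∧ M ⊨ φ}

/-- `SL L` is the set of isomorphism types of minimal `L`-structures, identified with
the quantifier-free theories of minimal `L`-structures (equivalently, with the maximal
finitely satisfiable sets of quantifier-free `L`-sentences). -/
def SL (L : FirstOrder.Language.{u, v}) : Type (max u v) :=
  {S : Set L.Sentence // ∃ (M : Type (max u v)) (_ : L.Structure M), L.IsMinimal M ∧ S = L.qf M}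

/-- The basic set `U_φ = {S ∈ S_L : φ ∈ S}`. -/
def USet {L : FirstOrder.Language.{u, v}} (φ : L.Sentence) : Set (SL L) :=
  {S : SL L | φ ∈ S.1}

/-- The Stone topology `τ` on `S_L`, with basis `{U_φ : φ ∈ QF(L)}`. -/
instance stoneTopology (L : FirstOrder.Language.{u, v}) : TopologicalSpace (SL L) :=
  TopologicalSpace.generateFrom
    {V : Set (SL L) | ∃ φ : L.Sentence, BoundedFormula.IsQF φ ∧ V = USet φ}

/-- `ModS L φ` is the set of isomorphism types of minimal models of the `L`-sentence `φ`. -/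
def ModS (L : FirstOrder.Language.{u, v}) (φ : L.Sentence) : Set (SL L) :=
  {S : SL L |
    ∃ (M : Type (max u v)) (_ : L.Structure M), L.IsMinimal M ∧ M ⊨ φ ∧ S.1 = L.qf M}

/-- A bounded formula is existential if it is a quantifier-free formula preceded by a block of
existential quantifiers. -/
inductive IsExistentialBF {L : FirstOrder.Language.{u, v}} {α : Type w} :
    ∀ {n : ℕ}, L.BoundedFormula α n → Prop
  | of_isQF {n : ℕ} {φ : L.BoundedFormula α n} (h : φ.IsQF) : IsExistentialBF φ
  | ex {n : ℕ} {φ : L.BoundedFormula α (n + 1)} (h : IsExistentialBF φ) : IsExistentialBF φ.ex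

/-! Every element of a minimal structure is the value of a closed term. Hence a minimal structure
satisfies `∃ x̄, ψ(x̄)`, with `ψ` quantifier-free, iff it satisfies one of the quantifier-free
sentences `ψ(t̄)` with `t̄` closed terms, so `Mod_S(∃ x̄, ψ)` is the union of the basic open sets
`U_{ψ(t̄)}`. -/

namespace FirstOrder.Language.BoundedFormula

variable {L : Language.{u, v}} {α : Type*} {β : Type*} {n : ℕ}

protected theorem IsQF.toFormula {φ : L.BoundedFormula α n} (h : φ.IsQF) : φ.toFormula.IsQF :=
  IsQF.recOn h isQF_bot
    (fun h => h.recOn (fun _ _ => (IsAtomic.equal _ _).isQF) fun _ _ => (IsAtomic.rel _ _).isQF)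
    fun _ _ h₁ h₂ => h₁.imp h₂

protected theorem IsQF.subst {φ : L.BoundedFormula α n} (h : φ.IsQF) (f : α → L.Term β) :
    (φ.subst f).IsQF :=
  IsQF.recOn h isQF_bot
    (fun h => h.recOn (fun _ _ => (IsAtomic.equal _ _).isQF) fun _ _ => (IsAtomic.rel _ _).isQF)
    fun _ _ h₁ h₂ => h₁.imp h₂

def instantiate (ψ : L.BoundedFormula Empty n) (t : Fin n → L.Term Empty) : L.Sentence :=
  ψ.toFormula.subst (Sum.elim Empty.elim t)

theorem IsQF.instantiate {ψ : L.BoundedFormula Empty n} (h : ψ.IsQF) (t : Fin n → L.Term Empty) :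
    (ψ.instantiate t).IsQF :=
  h.toFormula.subst _

theorem realize_instantiate (ψ : L.BoundedFormula Empty n) (t : Fin n → L.Term Empty)
    (M : Type*) [L.Structure M] :
    M ⊨ ψ.instantiate t ↔
      ψ.Realize (default : Empty → M) fun i => (t i).realize (default : Empty → M) := by
  rw [Sentence.Realize, instantiate, Formula.Realize, realize_subst, ← Formula.Realize,
    realize_toFormula, Subsingleton.elim (_ ∘ Sum.inl) default]
  rfl

end FirstOrder.Language.BoundedFormula

section

variable {L : FirstOrder.Language.{u, v}} {n : ℕ}

theorem FirstOrder.Language.IsMinimal.exists_term_realize_eq {M : Type*} [L.Structure M]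
    (hM : L.IsMinimal M) (x : M) : ∃ t : L.Term Empty, t.realize default = x := by
  obtain ⟨t, rfl⟩ :=
    (Substructure.mem_closure_iff_exists_term (L := L)).1 (hM ▸ Substructure.mem_top x)
  exact ⟨t.relabel default, by rw [Term.realize_relabel, Subsingleton.elim (default ∘ default) _]⟩

theorem isOpen_USet {φ : L.Sentence} (h : φ.IsQF) : IsOpen (USet φ) :=
  TopologicalSpace.isOpen_generateFrom_of_mem ⟨φ, h, rfl⟩

theorem ModS_exs_eq_iUnion {ψ : L.BoundedFormula Empty n} (h : ψ.IsQF) :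
    ModS L ψ.exs = ⋃ t : Fin n → L.Term Empty, USet (ψ.instantiate t) := by
  ext S
  simp only [ModS, USet, Set.mem_ofPred_eq, Set.mem_iUnion]
  constructor
  · rintro ⟨M, _, hM, hψ, hS⟩
    obtain ⟨xs, hxs⟩ := BoundedFormula.realize_exs.1 hψ
    choose t ht using fun i => hM.exists_term_realize_eq (xs i)
    refine ⟨t, hS ▸ ⟨h.instantiate t, (ψ.realize_instantiate t M).2 ?_⟩⟩
    simpa only [ht] using hxs
  · rintro ⟨t, ht⟩
    obtain ⟨M, _, hM, hS⟩ := S.2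
    have hMt : M ⊨ ψ.instantiate t := (hS ▸ ht : ψ.instantiate t ∈ L.qf M).2
    exact ⟨M, _, hM, BoundedFormula.realize_exs.2 ⟨_, (ψ.realize_instantiate t M).1 hMt⟩, hS⟩

theorem isOpen_ModS_exs {ψ : L.BoundedFormula Empty n} (hψ : IsExistentialBF ψ) :
    IsOpen (ModS L ψ.exs) := by
  induction hψ with
  | of_isQF h =>
    rw [ModS_exs_eq_iUnion h]
    exact isOpen_iUnion fun t => isOpen_USet (h.instantiate t)
  | ex _ ih => exact ih -- `φ.ex.exs` unfolds to `φ.exs`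

end

theorem isOpen_ModS_of_existential_general (L : FirstOrder.Language.{u, v})
    (φ : L.Sentence) (hφ : IsExistentialBF φ) :
    IsOpen (ModS L φ) :=
  isOpen_ModS_exs hφ

/-- **Proposition 2.3.** If `φ` is an existential `L`-sentence then `Mod_S(φ)` is open in the
Stone space `(S_L, τ)`. -/
theorem isOpen_ModS_of_existential (L : FirstOrder.Language.{u, v}) [Nonempty L.Constants]
    (φ : L.Sentence) (hφ : IsExistentialBF φ) :
    IsOpen (ModS L φ) :=
  isOpen_ModS_of_existential_general L φ hφ
end

section
/- If φ is a universal L-sentence (a quantifier-free formula preceded by a block of universal quantifiers), then Mod_S(φ) is closed in the topological space (S_L, τ). -/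
open FirstOrder FirstOrder.Language

universe u v

/-- A bounded formula is universal if it is a quantifier-free formula preceded by a block of
universal quantifiers. -/
inductive IsUniversalBF {L : FirstOrder.Language.{u, v}} {α : Type w} :
    ∀ {n : ℕ}, L.BoundedFormula α n → Prop
  | of_isQF {n : ℕ} {φ : L.BoundedFormula α n} (h : φ.IsQF) : IsUniversalBF φ
  | all {n : ℕ} {φ : L.BoundedFormula α (n + 1)} (h : IsUniversalBF φ) : IsUniversalBF φ.all

section Aux

variable {L : FirstOrder.Language.{u, v}}

lemma isQF_toFormula : ∀ {n : ℕ} {φ : L.BoundedFormula Empty n}, φ.IsQF → φ.toFormula.IsQF := by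
  intro n φ h
  induction h with
  | falsum => exact BoundedFormula.IsQF.falsum
  | of_isAtomic h =>
    cases h with
    | equal t₁ t₂ => exact (BoundedFormula.IsAtomic.equal _ _).isQF
    | rel R ts => exact (BoundedFormula.IsAtomic.rel _ _).isQF
  | imp h₁ h₂ ih₁ ih₂ => exact ih₁.imp ih₂

lemma isQF_subst {α β : Type*} {φ : L.Formula α} (h : φ.IsQF) (f : α → L.Term β) :
    (φ.subst f).IsQF := by
  induction h with
  | falsum => exact BoundedFormula.IsQF.falsum
  | of_isAtomic h =>
    cases h with
    | equal t₁ t₂ => exact (BoundedFormula.IsAtomic.equal _ _).isQF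
    | rel R ts => exact (BoundedFormula.IsAtomic.rel _ _).isQF
  | imp h₁ h₂ ih₁ ih₂ => exact ih₁.imp ih₂

/-- Peeling a universal sentence down to its QF matrix. -/
lemma exists_alls_of_isUniversal : ∀ {n : ℕ} (φ : L.BoundedFormula Empty n),
    IsUniversalBF φ → ∃ (k : ℕ) (ψ : L.BoundedFormula Empty k), ψ.IsQF ∧ φ.alls = ψ.alls := by
  intro n φ h
  induction h with
  | of_isQF h => exact ⟨_, _, h, rfl⟩
  | all h ih => exact ih

/-- Instantiation of the matrix at a tuple of closed terms. -/
def instSent {k : ℕ} (ψ : L.BoundedFormula Empty k) (t : Fin k → L.Term Empty) : L.Sentence :=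
  ψ.toFormula.subst (Sum.elim (fun e => e.elim) t)

lemma isQF_instSent {k : ℕ} {ψ : L.BoundedFormula Empty k} (h : ψ.IsQF)
    (t : Fin k → L.Term Empty) : (instSent ψ t).IsQF :=
  isQF_subst (isQF_toFormula h) _

lemma realize_instSent {k : ℕ} {ψ : L.BoundedFormula Empty k} (t : Fin k → L.Term Empty)
    (M : Type*) [L.Structure M] :
    M ⊨ instSent ψ t ↔
      ψ.Realize (default : Empty → M) (fun i => (t i).realize (default : Empty → M)) := by
  have hE : ∀ (f g : Empty → M), f = g := fun f g => funext fun e => e.elim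
  rw [Sentence.Realize, instSent, Formula.Realize, BoundedFormula.realize_subst,
    ← Formula.Realize, BoundedFormula.realize_toFormula]
  refine iff_of_eq ?_
  congr 1
  exact hE _ _

lemma term_surjective_of_isMinimal {M : Type*} [L.Structure M] (h : L.IsMinimal M) (x : M) :
    ∃ t : L.Term Empty, t.realize (default : Empty → M) = x := by
  have hx : x ∈ Substructure.closure L (∅ : Set M) := by rw [h]; trivial
  rw [Substructure.mem_closure_iff_exists_term] at hx
  obtain ⟨t, ht⟩ := hx
  refine ⟨t.relabel (fun a => absurd a.2 (Set.notMem_empty a.1)), ?_⟩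
  rw [Term.realize_relabel, ← ht]
  congr 1
  funext a
  exact absurd a.2 (Set.notMem_empty a.1)

lemma not_mem_qf_iff {M : Type*} [L.Structure M] {χ : L.Sentence} (h : χ.IsQF) :
    χ ∉ L.qf M ↔ χ.not ∈ L.qf M := by
  simp only [FirstOrder.Language.qf, Set.mem_setOf_eq, not_and]
  constructor
  · intro hn
    exact ⟨h.not, fun hc => hn h hc⟩
  · rintro ⟨-, hn⟩ -
    exact hn

lemma isClosed_USet {χ : L.Sentence} (h : χ.IsQF) : IsClosed (USet χ) := by
  rw [← isOpen_compl_iff]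
  have : (USet χ)ᶜ = USet χ.not := by
    ext S
    obtain ⟨M, _, _, hS⟩ := S.2
    simp only [Set.mem_compl_iff, USet, Set.mem_setOf_eq, hS]
    exact not_mem_qf_iff h
  rw [this]
  exact TopologicalSpace.GenerateOpen.basic _ ⟨χ.not, h.not, rfl⟩

lemma modS_eq_iInter {k : ℕ} {ψ : L.BoundedFormula Empty k} (hψ : ψ.IsQF) :
    ModS L ψ.alls = ⋂ t : Fin k → L.Term Empty, USet (instSent ψ t) := by
  ext S
  simp only [Set.mem_iInter]
  constructor
  · rintro ⟨M, _, hmin, hmod, hS⟩ t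
    simp only [USet, Set.mem_setOf_eq, hS]
    refine ⟨isQF_instSent hψ t, ?_⟩
    rw [realize_instSent]
    rw [Sentence.Realize, BoundedFormula.realize_alls] at hmod
    exact hmod _
  · intro hT
    obtain ⟨M, _, hmin, hS⟩ := S.2
    refine ⟨M, ‹_›, hmin, ?_, hS⟩
    rw [Sentence.Realize, BoundedFormula.realize_alls]
    intro xs
    choose t ht using fun i => term_surjective_of_isMinimal hmin (xs i)
    have := hT t
    simp only [USet, Set.mem_setOf_eq, hS, FirstOrder.Language.qf] at this
    have h2 := (realize_instSent t M).mp this.2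
    have hxs : (fun i => (t i).realize (default : Empty → M)) = xs := funext ht
    rwa [hxs] at h2

end Aux

/-- **Proposition 2.4.** If `φ` is a universal `L`-sentence then `Mod_S(φ)` is closed in the
Stone space `(S_L, τ)`. -/
theorem isClosed_ModS_of_universal (L : FirstOrder.Language.{u, v}) [Nonempty L.Constants]
    (φ : L.Sentence) (hφ : IsUniversalBF φ) :
    IsClosed (ModS L φ) := by
  obtain ⟨k, ψ, hψ, hφψ⟩ := exists_alls_of_isUniversal φ hφ
  have : φ = ψ.alls := hφψ
  rw [this, modS_eq_iInter hψ]
  exact isClosed_iInter fun t => isClosed_USet (isQF_instSent hψ t)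
end

section
/- Let X be a set of minimal L-structures and M a minimal L-structure. The following are equivalent: (1) qf(M) belongs to the closure of {qf(N) : N ∈ X} in the Stone topology on S_L; (2) M is isomorphic to the core (the substructure generated by the empty set) of some ultraproduct ∏_{i∈I} M_i / D of structures M_i ∈ X with respect to an ultrafilter D on I; (3) M embeds into some ultraproduct of structures from X. -/
open FirstOrder FirstOrder.Language

universe u v

/-! A minimal structure is the set of values of its closed terms, so it embeds into `P` exactly
when every quantifier-free sentence true in it is true in `P`, and then its image is the core
of `P`. Basic neighbourhoods in `S_L` are cut out by finitely many quantifier-free sentences, so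
`qf(M)` lies in the closure of `X` iff every finite subset of `qf(M)` holds in some member of
`X`. By Łoś's theorem this is the same as `qf(M)` holding in an ultraproduct of members of `X`:
index the factors by the finite subsets of `qf(M)` and take an ultrafilter refining `atTop`. -/

namespace FirstOrder.Language

variable {L : Language.{u, v}} {M P : Type*} [L.Structure M] [L.Structure P]

theorem BoundedFormula.IsQF.realize_sentence_embedding {φ : L.Sentence} (hφ : φ.IsQF)
    (f : M ↪[L] P) : P ⊨ φ ↔ M ⊨ φ := by
  simp only [Sentence.Realize, Formula.Realize, ← hφ.realize_embedding f (v := default)]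
  rw [Subsingleton.elim (f ∘ default) default, Subsingleton.elim (f ∘ default) default]

theorem qf_subset_of_embedding (f : M ↪[L] P) : L.qf M ⊆ L.qf P :=
  fun _ ⟨hφ, hM⟩ => ⟨hφ, (hφ.realize_sentence_embedding f).2 hM⟩

theorem realize_iff_of_qf_subset (h : L.qf M ⊆ L.qf P) {φ : L.Sentence} (hφ : φ.IsQF) :
    P ⊨ φ ↔ M ⊨ φ := by
  refine ⟨fun hP => by_contra fun hM => ?_, fun hM => (h ⟨hφ, hM⟩).2⟩
  exact (Sentence.realize_not P).1 (h ⟨hφ.not, (Sentence.realize_not M).2 hM⟩).2 hP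

theorem realize_term_eq_iff_of_qf_subset (h : L.qf M ⊆ L.qf P) (t s : L.Term Empty) :
    t.realize (default : Empty → P) = s.realize default ↔
      t.realize (default : Empty → M) = s.realize default := by
  simpa only [Sentence.Realize, Formula.realize_equal] using
    realize_iff_of_qf_subset h (φ := Term.equal t s) (BoundedFormula.IsAtomic.equal _ _).isQF

theorem realize_rel_iff_of_qf_subset (h : L.qf M ⊆ L.qf P) {n : ℕ} (R : L.Relations n)
    (ts : Fin n → L.Term Empty) :
    Structure.RelMap R (fun i => (ts i).realize (default : Empty → P)) ↔
      Structure.RelMap R (fun i => (ts i).realize (default : Empty → M)) := by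
  simpa only [Sentence.Realize, Formula.realize_rel] using
    realize_iff_of_qf_subset h (φ := R.formula ts) (BoundedFormula.IsAtomic.rel _ _).isQF

theorem IsMinimal.exists_term_realize_eq_s10 (hM : L.IsMinimal M) (x : M) :
    ∃ t : L.Term Empty, t.realize (default : Empty → M) = x := by
  obtain ⟨t, rfl⟩ := Substructure.mem_closure_iff_exists_term.1 (hM ▸ Substructure.mem_top x)
  refine ⟨t.relabel fun y => (Set.notMem_empty _ y.2).elim, ?_⟩
  rw [Term.realize_relabel]
  exact congrArg t.realize (funext fun y => (Set.notMem_empty _ y.2).elim)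

theorem IsMinimal.nonempty_embedding_iff (hM : L.IsMinimal M) :
    Nonempty (M ↪[L] P) ↔ L.qf M ⊆ L.qf P := by
  refine ⟨fun ⟨f⟩ => qf_subset_of_embedding f, fun h => ?_⟩
  choose T hT using hM.exists_term_realize_eq_s10
  have map_realize (t : L.Term Empty) :
      (T (t.realize default)).realize (default : Empty → P) = t.realize default :=
    (realize_term_eq_iff_of_qf_subset h _ _).2 (hT _)
  have realize_func {n : ℕ} (F : L.Functions n) (xs : Fin n → M) :
      Structure.funMap F xs = (Term.func F fun i => T (xs i)).realize (default : Empty → M) := by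
    simp only [Term.realize_func, hT]
  refine ⟨⟨⟨fun x => (T x).realize default, fun x y hxy => ?_⟩,
    fun F xs => ?_, fun R xs => ?_⟩⟩
  · rw [← hT x, ← hT y]
    exact (realize_term_eq_iff_of_qf_subset h _ _).1 hxy
  · simp only [realize_func, map_realize]
    rfl
  · exact (realize_rel_iff_of_qf_subset h R fun i => T (xs i)).trans (by simp only [hT])

theorem IsMinimal.range_eq_closure_empty (hM : L.IsMinimal M) (f : M →[L] P) :
    f.range = Substructure.closure L (∅ : Set P) := by
  rw [Hom.range_eq_map, ← hM, ← Substructure.closure_image, Set.image_empty]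

theorem IsMinimal.nonempty_equiv_closure_empty_iff (hM : L.IsMinimal M) :
    Nonempty (M ≃[L] Substructure.closure L (∅ : Set P)) ↔ Nonempty (M ↪[L] P) := by
  refine ⟨fun ⟨e⟩ => ⟨(Substructure.subtype _).comp e.toEmbedding⟩, fun ⟨e⟩ => ?_⟩
  rw [← hM.range_eq_closure_empty e.toHom]
  exact ⟨e.equivRange⟩

variable {ι : Type*} {N : ι → Type*} [∀ i, L.Structure (N i)]

theorem exists_ultraproduct_qf_superset_iff [∀ i, Nonempty (N i)] (T : Set L.Sentence) :
    (∃ (κ : Type (max u v)) (f : κ → ι) (D : Ultrafilter κ),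
        T ⊆ L.qf ((D : Filter κ).Product fun k => N (f k))) ↔
      ∀ s ⊆ T, s.Finite → ∃ i, s ⊆ L.qf (N i) := by
  refine ⟨fun ⟨κ, f, D, hT⟩ s hsT hs => ?_, fun H => ?_⟩
  · have : ∀ᶠ k in (D : Filter κ), ∀ φ ∈ s, N (f k) ⊨ φ :=
      (Filter.eventually_all_finite hs).2 fun φ hφ =>
        (Ultraproduct.sentence_realize φ).1 (hT (hsT hφ)).2
    obtain ⟨k, hk⟩ := this.exists
    exact ⟨f k, fun φ hφ => ⟨(hT (hsT hφ)).1, hk φ hφ⟩⟩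
  · choose f hf using fun k : Finset T =>
      H (Subtype.val '' (k : Set T)) (Subtype.coe_image_subset _ _) (k.finite_toSet.image _)
    refine ⟨Finset T, f, Ultrafilter.of Filter.atTop, fun φ hφ => ⟨?_, ?_⟩⟩
    · exact (hf {⟨φ, hφ⟩} ⟨⟨φ, hφ⟩, by simp, rfl⟩).1
    · rw [Ultraproduct.sentence_realize]
      refine Ultrafilter.of_le _ ((Filter.eventually_ge_atTop {⟨φ, hφ⟩}).mono fun k hk => ?_)
      exact (hf k ⟨⟨φ, hφ⟩, hk (Finset.mem_singleton_self _), rfl⟩).2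

end FirstOrder.Language

namespace SL

variable {L : FirstOrder.Language.{u, v}}

theorem isQF_of_mem (x : SL L) {φ : L.Sentence} (hφ : φ ∈ x.1) : φ.IsQF := by
  obtain ⟨M, _, -, hx⟩ := x.2
  exact (hx ▸ hφ).1

theorem isOpen_USet {φ : L.Sentence} (hφ : φ.IsQF) : IsOpen (USet φ) :=
  TopologicalSpace.isOpen_generateFrom_of_mem ⟨φ, hφ, rfl⟩

theorem mem_closure_iff {A : Set (SL L)} {x : SL L} :
    x ∈ closure A ↔ ∀ s ⊆ x.1, s.Finite → ∃ y ∈ A, s ⊆ y.1 := by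
  refine ⟨fun hx s hsx hs => ?_, fun H => ?_⟩
  · have hopen : IsOpen (⋂ φ ∈ s, USet φ) :=
      hs.isOpen_biInter fun φ hφ => isOpen_USet (x.isQF_of_mem (hsx hφ))
    obtain ⟨y, hys, hyA⟩ := _root_.mem_closure_iff.1 hx _ hopen (Set.mem_iInter₂.2 hsx)
    exact ⟨y, hyA, fun φ hφ => Set.mem_iInter₂.1 hys φ hφ⟩
  · refine ((TopologicalSpace.isTopologicalBasis_of_subbasis rfl).mem_closure_iff).2 ?_
    rintro _ ⟨F, ⟨hF, hFsub⟩, rfl⟩ hxF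
    choose! σ _ hFσ using fun U (hU : U ∈ F) => hFsub hU
    have hFx : σ '' F ⊆ x.1 := Set.image_subset_iff.2 fun U hU =>
      show x ∈ USet (σ U) from hFσ U hU ▸ hxF U hU
    obtain ⟨y, hyA, hy⟩ := H (σ '' F) hFx (hF.image σ)
    exact ⟨y, fun U hU => hFσ U hU ▸ hy ⟨U, hU, rfl⟩, hyA⟩

end SL

/-- **Proposition 2.9.** For a set `X = {N i : i ∈ ι}` of minimal `L`-structures and a minimal
`L`-structure `M`, the following are equivalent: (1) `qf(M)` belongs to the closure of
`{qf(N) : N ∈ X}` in the Stone topology on `S_L`; (2) `M` is isomorphic to the core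
(the substructure generated by the empty set) of an ultraproduct of structures from `X`;
(3) `M` embeds into an ultraproduct of structures from `X`. -/
theorem mem_closure_tfae_ultraproduct (L : FirstOrder.Language.{u, v}) [Nonempty L.Constants]
    {ι : Type (max u v)} (N : ι → Type (max u v)) [∀ i, L.Structure (N i)]
    (hN : ∀ i, L.IsMinimal (N i))
    (M : Type (max u v)) [iM : L.Structure M] (hM : L.IsMinimal M) :
    List.TFAE
      [(⟨L.qf M, M, iM, hM, rfl⟩ : SL L) ∈ closure {S : SL L | ∃ i, S.1 = L.qf (N i)},
       ∃ (κ : Type (max u v)) (f : κ → ι) (D : Ultrafilter κ),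
         Nonempty
           (M ≃[L]
             Substructure.closure L (∅ : Set ((D : Filter κ).Product fun k => N (f k)))),
       ∃ (κ : Type (max u v)) (f : κ → ι) (D : Ultrafilter κ),
         Nonempty (M ↪[L] (D : Filter κ).Product fun k => N (f k))] := by
  -- Łoś's theorem needs nonempty factors; a constant symbol provides an element.
  have (i : ι) : Nonempty (N i) := ⟨Structure.funMap (Classical.arbitrary L.Constants) default⟩
  have mem_X_iff (s : Set L.Sentence) :
      (∃ S ∈ {S : SL L | ∃ i, S.1 = L.qf (N i)}, s ⊆ S.1) ↔ ∃ i, s ⊆ L.qf (N i) :=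
    ⟨fun ⟨_, ⟨i, hi⟩, hs⟩ => ⟨i, hi ▸ hs⟩,
      fun ⟨i, hs⟩ => ⟨⟨L.qf (N i), N i, inferInstance, hN i, rfl⟩, ⟨i, rfl⟩, hs⟩⟩
  tfae_have 1 ↔ 3 := SL.mem_closure_iff.trans <| by
    simp only [mem_X_iff, hM.nonempty_embedding_iff, exists_ultraproduct_qf_superset_iff]
  tfae_have 2 ↔ 3 := by simp only [hM.nonempty_equiv_closure_empty_iff]
  tfae_finish
end

section
/- Let Γ be the set of universal L₀-sentences consisting of: (a) ∀u∀v (R_δ(u,v) → R_ε(v,u)) for all δ < ε; (b) ∀u∀v∀w ((R_ε(u,v) ∧ R_δ(v,w)) → R_η(u,w)) for all ε + δ < η; (c) ∀u R_ε(u,u) for all ε; (d) ∀u∀v (R_δ(u,v) → R_ε(u,v)) for all δ < ε, where δ, ε, η range over positive reals. Then an L₀-structure M is a model of Γ if and only if there exists a semi-metric d on the universe of M such that M is an X-structure for the semi-metric space X = (universe of M, d). In particular, the class of semi-metric structures is universally axiomatizable. -/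
open FirstOrder FirstOrder.Language
open scoped ENNReal

universe u

/-- A semi-metric on `X`: a map `X × X → [0, ∞]` that is symmetric, satisfies the triangle
inequality, and vanishes on the diagonal. -/
structure SemiMetric (X : Type u) where
  d : X → X → ℝ≥0∞
  symm : ∀ x y, d x y = d y x
  triangle : ∀ x y z, d x z ≤ d x y + d y z
  refl : ∀ x, d x x = 0

/-- The relation symbols of the language of semi-metric structures: one binary relation symbol
`R_ε` for each real `ε > 0`. -/
def metricRel : ℕ → Type
  | 2 => {ε : ℝ // 0 < ε}
  | _ => Empty

/-- The relational language `L₀` of semi-metric structures. -/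
def metricLang : FirstOrder.Language.{0, 0} := ⟨fun _ => Empty, metricRel⟩

/-- The relation symbol `R_ε` of `metricLang`. -/
def Rsym (ε : {ε : ℝ // 0 < ε}) : metricLang.Relations 2 := ε

/-- `M` (an `L₀`-structure on the underlying set of the semi-metric space `X`) is an
`X`-structure: for all `ε > 0` and all `x, y`, `d_X(x,y) < ε` implies `R_ε(x,y)`, and
`R_ε(x,y)` implies `d_X(x,y) ≤ ε`. -/
def IsXStructure (X : Type u) [metricLang.Structure X] (dX : SemiMetric X) : Prop :=
  ∀ (ε : {ε : ℝ // 0 < ε}) (x y : X),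
    (dX.d x y < ENNReal.ofReal ε.1 → Structure.RelMap (Rsym ε) ![x, y]) ∧
    (Structure.RelMap (Rsym ε) ![x, y] → dX.d x y ≤ ENNReal.ofReal ε.1)

/-- The semi-metric `d_M` read off from an `L₀`-structure `M`:
`d_M(x,y) = inf {ε > 0 : M ⊨ R_ε(x,y)}`, equal to `∞` if no `R_ε(x,y)` holds. -/
noncomputable def dM (X : Type u) [metricLang.Structure X] (x y : X) : ℝ≥0∞ :=
  ⨅ (ε : {ε : ℝ // 0 < ε}) (_ : Structure.RelMap (Rsym ε) ![x, y]), ENNReal.ofReal ε.1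

/-- The atomic formula `R_ε(v_i, v_j)`. -/
def relBF {n : ℕ} (ε : {ε : ℝ // 0 < ε}) (i j : Fin n) : metricLang.BoundedFormula Empty n :=
  BoundedFormula.rel (Rsym ε) ![Term.var (Sum.inr i), Term.var (Sum.inr j)]

/-- Axiom (a): `∀u∀v (R_δ(u,v) → R_ε(v,u))`. -/
def sentA (δ ε : {ε : ℝ // 0 < ε}) : metricLang.Sentence :=
  (((relBF δ 0 1).imp (relBF ε 1 0)).all).all

/-- Axiom (b): `∀u∀v∀w ((R_ε(u,v) ∧ R_δ(v,w)) → R_η(u,w))`. -/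
def sentB (ε δ η : {ε : ℝ // 0 < ε}) : metricLang.Sentence :=
  ((((relBF ε 0 1 ⊓ relBF δ 1 2).imp (relBF η 0 2)).all).all).all

/-- Axiom (c): `∀u R_ε(u,u)`. -/
def sentC (ε : {ε : ℝ // 0 < ε}) : metricLang.Sentence :=
  (relBF ε 0 0).all

/-- Axiom (d): `∀u∀v (R_δ(u,v) → R_ε(u,v))`. -/
def sentD (δ ε : {ε : ℝ // 0 < ε}) : metricLang.Sentence :=
  (((relBF δ 0 1).imp (relBF ε 0 1)).all).all

/-- The universal theory `Γ` of semi-metric structures. -/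
def Gamma : Set metricLang.Sentence :=
  {φ | ∃ δ ε : {ε : ℝ // 0 < ε}, δ.1 < ε.1 ∧ φ = sentA δ ε} ∪
  {φ | ∃ ε δ η : {ε : ℝ // 0 < ε}, ε.1 + δ.1 < η.1 ∧ φ = sentB ε δ η} ∪
  {φ | ∃ ε : {ε : ℝ // 0 < ε}, φ = sentC ε} ∪
  {φ | ∃ δ ε : {ε : ℝ // 0 < ε}, δ.1 < ε.1 ∧ φ = sentD δ ε}

/-! An `X`-structure pins `R_ε(x, y)` between `d(x, y) < ε` and `d(x, y) ≤ ε`; the strict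
inequalities between the indices in `Γ` absorb exactly this gap, so every `X`-structure models `Γ`.
Conversely, a model of `Γ` is an `X`-structure for `d_M(x, y) = inf {ε : R_ε(x, y)}`: axioms
(a)–(c) give symmetry, the triangle inequality and `d_M(x, x) = 0` after passing to the infimum,
and the monotonicity axiom (d) makes `d_M(x, y) < ε` imply `R_ε(x, y)`. -/

local notation "ℝ>0" => {ε : ℝ // 0 < ε}

local notation:50 x " ~[" ε "] " y:50 => Structure.RelMap (Rsym ε) ![x, y]

theorem relBF_isQF {n : ℕ} (ε : ℝ>0) (i j : Fin n) : (relBF ε i j).IsQF :=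
  (BoundedFormula.IsAtomic.rel (Rsym ε) _).isQF

theorem gamma_isUniversal : ∀ φ ∈ Gamma, IsUniversalBF φ := by
  rintro φ (((⟨δ, ε, -, rfl⟩ | ⟨ε, δ, η, -, rfl⟩) | ⟨ε, rfl⟩) | ⟨δ, ε, -, rfl⟩)
  · exact .all (.all (.of_isQF ((relBF_isQF δ 0 1).imp (relBF_isQF ε 1 0))))
  · exact .all (.all (.all (.of_isQF
      (((relBF_isQF ε 0 1).inf (relBF_isQF δ 1 2)).imp (relBF_isQF η 0 2)))))
  · exact .all (.of_isQF (relBF_isQF ε 0 0))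
  · exact .all (.all (.of_isQF ((relBF_isQF δ 0 1).imp (relBF_isQF ε 0 1))))

section Realize

variable {M : Type u} [metricLang.Structure M]

theorem realize_relBF {n : ℕ} (ε : ℝ>0) (i j : Fin n) (v : Empty → M) (xs : Fin n → M) :
    (relBF ε i j).Realize v xs ↔ xs i ~[ε] xs j :=
  iff_of_eq (congrArg (Structure.RelMap (Rsym ε)) (funext (Fin.forall_fin_two.2 ⟨rfl, rfl⟩)))

theorem realize_sentA (δ ε : ℝ>0) :
    Sentence.Realize M (sentA δ ε) ↔ ∀ u v : M, u ~[δ] v → v ~[ε] u := by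
  simp [sentA, Sentence.Realize, Formula.Realize, realize_relBF, Fin.snoc]

theorem realize_sentB (ε δ η : ℝ>0) :
    Sentence.Realize M (sentB ε δ η) ↔ ∀ u v w : M, u ~[ε] v → v ~[δ] w → u ~[η] w := by
  simp [sentB, Sentence.Realize, Formula.Realize, realize_relBF, Fin.snoc]

theorem realize_sentC (ε : ℝ>0) : Sentence.Realize M (sentC ε) ↔ ∀ u : M, u ~[ε] u := by
  simp [sentC, Sentence.Realize, Formula.Realize, realize_relBF, Fin.snoc]

theorem realize_sentD (δ ε : ℝ>0) :
    Sentence.Realize M (sentD δ ε) ↔ ∀ u v : M, u ~[δ] v → u ~[ε] v := by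
  simp [sentD, Sentence.Realize, Formula.Realize, realize_relBF, Fin.snoc]

end Realize

structure GammaAxioms (M : Type u) [metricLang.Structure M] : Prop where
  rel_symm : ∀ δ ε : ℝ>0, δ.1 < ε.1 → ∀ u v : M, u ~[δ] v → v ~[ε] u
  rel_trans : ∀ ε δ η : ℝ>0, ε.1 + δ.1 < η.1 → ∀ u v w : M, u ~[ε] v → v ~[δ] w → u ~[η] w
  rel_refl : ∀ (ε : ℝ>0) (u : M), u ~[ε] u
  rel_mono : ∀ δ ε : ℝ>0, δ.1 < ε.1 → ∀ u v : M, u ~[δ] v → u ~[ε] v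

section GammaAxioms

variable {M : Type u} [metricLang.Structure M]

theorem realize_gamma_iff : (∀ φ ∈ Gamma, Sentence.Realize M φ) ↔ GammaAxioms M := by
  constructor
  · intro h
    exact ⟨fun δ ε hδε => (realize_sentA δ ε).1 (h _ (.inl (.inl (.inl ⟨δ, ε, hδε, rfl⟩)))),
      fun ε δ η hη => (realize_sentB ε δ η).1 (h _ (.inl (.inl (.inr ⟨ε, δ, η, hη, rfl⟩)))),
      fun ε => (realize_sentC ε).1 (h _ (.inl (.inr ⟨ε, rfl⟩))),
      fun δ ε hδε => (realize_sentD δ ε).1 (h _ (.inr ⟨δ, ε, hδε, rfl⟩))⟩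
  · rintro h φ (((⟨δ, ε, hδε, rfl⟩ | ⟨ε, δ, η, hη, rfl⟩) | ⟨ε, rfl⟩) | ⟨δ, ε, hδε, rfl⟩)
    · exact (realize_sentA δ ε).2 (h.rel_symm δ ε hδε)
    · exact (realize_sentB ε δ η).2 (h.rel_trans ε δ η hη)
    · exact (realize_sentC ε).2 (h.rel_refl ε)
    · exact (realize_sentD δ ε).2 (h.rel_mono δ ε hδε)

theorem IsXStructure.gammaAxioms {d : SemiMetric M} (hX : IsXStructure M d) : GammaAxioms M := by
  have lt_of_rel {δ ε : ℝ>0} {u v : M} (hδε : δ.1 < ε.1) (h : u ~[δ] v) :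
      d.d u v < ENNReal.ofReal ε.1 :=
    ((hX δ u v).2 h).trans_lt ((ENNReal.ofReal_lt_ofReal_iff ε.2).2 hδε)
  refine ⟨fun δ ε hδε u v h => (hX ε v u).1 ?_, fun ε δ η hη u v w hε hδ => (hX η u w).1 ?_,
    fun ε u => (hX ε u u).1 ?_, fun δ ε hδε u v h => (hX ε u v).1 (lt_of_rel hδε h)⟩
  · exact d.symm v u ▸ lt_of_rel hδε h
  · calc d.d u w ≤ d.d u v + d.d v w := d.triangle u v w
      _ ≤ ENNReal.ofReal ε.1 + ENNReal.ofReal δ.1 := add_le_add ((hX ε u v).2 hε) ((hX δ v w).2 hδ)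
      _ = ENNReal.ofReal (ε.1 + δ.1) := (ENNReal.ofReal_add ε.2.le δ.2.le).symm
      _ < ENNReal.ofReal η.1 := (ENNReal.ofReal_lt_ofReal_iff η.2).2 hη
  · rw [d.refl]
    exact ENNReal.ofReal_pos.2 ε.2

end GammaAxioms

section dM

variable {M : Type u} [metricLang.Structure M]

theorem dM_le_of_relMap {ε : ℝ>0} {x y : M} (h : x ~[ε] y) : dM M x y ≤ ENNReal.ofReal ε.1 :=
  iInf₂_le ε h

theorem dM_le_of_forall_lt {c : ℝ} (hc : 0 ≤ c) {x y : M}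
    (h : ∀ η : ℝ>0, c < η.1 → x ~[η] y) : dM M x y ≤ ENNReal.ofReal c := by
  refine ENNReal.le_of_forall_pos_le_add fun r hr _ => ?_
  calc dM M x y ≤ ENNReal.ofReal (c + r) := dM_le_of_relMap (h ⟨c + r, by positivity⟩ (by simpa))
    _ = ENNReal.ofReal c + r := by
      rw [ENNReal.ofReal_add hc r.coe_nonneg, ENNReal.ofReal_coe_nnreal]

theorem exists_relMap_of_dM_lt {c : ℝ} {x y : M} (h : dM M x y < ENNReal.ofReal c) :
    ∃ δ : ℝ>0, δ.1 < c ∧ x ~[δ] y := by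
  obtain ⟨δ, hδ, hδc⟩ := by simpa only [dM, iInf_lt_iff] using h
  exact ⟨δ, (ENNReal.ofReal_lt_ofReal_iff_of_nonneg δ.2.le).1 hδc, hδ⟩

namespace GammaAxioms

variable (h : GammaAxioms M)
include h

theorem dM_comm (x y : M) : dM M x y = dM M y x := by
  have dM_le_swap (x y : M) : dM M y x ≤ dM M x y :=
    le_iInf₂ fun δ hδ => dM_le_of_forall_lt δ.2.le fun η hη => h.rel_symm δ η hη x y hδ
  exact le_antisymm (dM_le_swap y x) (dM_le_swap x y)

theorem dM_triangle (x y z : M) : dM M x z ≤ dM M x y + dM M y z := by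
  have hsum : dM M x y + dM M y z =
      ⨅ (δ : ℝ>0) (_ : y ~[δ] z) (ε : ℝ>0) (_ : x ~[ε] y),
        ENNReal.ofReal ε.1 + ENNReal.ofReal δ.1 := by
    simp only [dM, ENNReal.iInf_add, ENNReal.add_iInf]
  rw [hsum]
  refine le_iInf₂ fun δ hδ => le_iInf₂ fun ε hε => ?_
  rw [← ENNReal.ofReal_add ε.2.le δ.2.le]
  exact dM_le_of_forall_lt (add_pos ε.2 δ.2).le fun η hη => h.rel_trans ε δ η hη x y z hε hδ

theorem dM_self (x : M) : dM M x x = 0 :=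
  nonpos_iff_eq_zero.1 (by simpa using dM_le_of_forall_lt le_rfl fun η _ => h.rel_refl η x)

noncomputable def semiMetric : SemiMetric M :=
  ⟨dM M, h.dM_comm, h.dM_triangle, h.dM_self⟩

theorem isXStructure_semiMetric : IsXStructure M h.semiMetric := by
  refine fun ε x y => ⟨fun hlt => ?_, dM_le_of_relMap⟩
  obtain ⟨δ, hδε, hδ⟩ := exists_relMap_of_dM_lt hlt
  exact h.rel_mono δ ε hδε x y hδ

end GammaAxioms

end dM

/-- **Proposition 4.2.** `Γ` is a set of universal sentences, and an `L₀`-structure `M` is a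
model of `Γ` if and only if there is a semi-metric `d` on the universe of `M` for which `M` is
an `X`-structure, `X = (M, d)`. In particular, the class of semi-metric structures is
universally axiomatizable. -/
theorem gamma_axiomatizes_semimetric_structures :
    (∀ φ ∈ Gamma, IsUniversalBF φ) ∧
    ∀ (M : Type u) (St : metricLang.Structure M),
      (∀ φ ∈ Gamma, @FirstOrder.Language.Sentence.Realize metricLang M St φ) ↔
        ∃ d : SemiMetric M, @IsXStructure M St d := by
  refine ⟨gamma_isUniversal, fun M St => realize_gamma_iff.trans ⟨fun h => ?_, ?_⟩⟩
  · exact ⟨h.semiMetric, h.isXStructure_semiMetric⟩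
  · rintro ⟨d, hX⟩
    exact hX.gammaAxioms
end
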